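/- arXiv:1508.03949 — 2 statements merged into one kernel-verified Lean document; each statement's English description precedes it below -/
import Mathlib

section
/- Let (A_n) be a sequence of symmetric real n×n matrices satisfying the mean-field assumption, with A_n(i,i) = 0 for all i and max_{i,j∈[n]} |A_n(i,j)| → 0 as n → ∞. Let Y be a random element of {1,…,q}^n with law μ_n, and let X, X̂ and γ be as defined in the context. Then (1/n²)·E_{μ_n}[ ( Σ_{i=1}^n Σ_{r=1}^q (X_{ir} − X̂_{ir})·γ_{ir}(X) )² ] → 0 as n → ∞. -/
open Finset Filter Real

noncomputable def pottsH {n q : ℕ} (A : Matrix (Fin n) (Fin n) ℝ)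
    (J : Matrix (Fin q) (Fin q) ℝ) (h : Fin q → ℝ) (y : Fin n → Fin q) : ℝ :=
  (1 / 2) * ∑ i, ∑ j, A i j * J (y i) (y j) + ∑ i, h (y i)

/-- The Potts probability mass function `μ_n(y) = exp(H(y)) / Σ_{y'} exp(H(y'))`. -/
noncomputable def pottsWeight {n q : ℕ} (A : Matrix (Fin n) (Fin n) ℝ)
    (J : Matrix (Fin q) (Fin q) ℝ) (h : Fin q → ℝ) (y : Fin n → Fin q) : ℝ :=
  Real.exp (pottsH A J h y) / ∑ y' : Fin n → Fin q, Real.exp (pottsH A J h y')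

/-- The 0/1 encoding `x_{ir} = 1{y_i = r}` of a configuration. -/
noncomputable def xVec {n q : ℕ} (y : Fin n → Fin q) : Fin n → Fin q → ℝ :=
  fun i r => if y i = r then 1 else 0

/-- `γ_{ir}(z) = Σ_s J(r,s) Σ_j A(i,j) z_{js}`. -/
noncomputable def gam {n q : ℕ} (A : Matrix (Fin n) (Fin n) ℝ)
    (J : Matrix (Fin q) (Fin q) ℝ) (z : Fin n → Fin q → ℝ) (i : Fin n) (r : Fin q) : ℝ :=
  ∑ s, J r s * ∑ j, A i j * z j s

/-- The conditional expectation vector `x̂`. -/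
noncomputable def xHat {n q : ℕ} (A : Matrix (Fin n) (Fin n) ℝ)
    (J : Matrix (Fin q) (Fin q) ℝ) (h : Fin q → ℝ) (y : Fin n → Fin q)
    (i : Fin n) (r : Fin q) : ℝ :=
  Real.exp (gam A J (xVec y) i r + h r) / ∑ s, Real.exp (gam A J (xVec y) i s + h s)

/-- The quadratic part of the Hamiltonian, as a function on `[0,1]^{n×q}`. -/
noncomputable def Fquad {n q : ℕ} (A : Matrix (Fin n) (Fin n) ℝ)
    (J : Matrix (Fin q) (Fin q) ℝ) (z : Fin n → Fin q → ℝ) : ℝ :=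
  (1 / 2) * ∑ i, ∑ j, A i j * ∑ r, ∑ s, J r s * z i r * z j s

def meanFieldAssumption (A : (n : ℕ) → Matrix (Fin n) (Fin n) ℝ) : Prop :=
  (∃ C : ℝ, ∀ n : ℕ, ∀ x : Fin n → ℝ, (∀ j, x j ∈ Set.Icc (0:ℝ) 1) →
      ∑ i, |∑ j, A n i j * x j| ≤ C * n) ∧
  Tendsto (fun n : ℕ => Matrix.trace (A n * A n) / n) atTop (nhds 0)

/-!
Write `T = ∑ i, f i` with `f i = ⟨X i - X̂ i, γ i (X)⟩` (`pottsResidual`). Since `A i i = 0`,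
neither `γ i` nor `X̂ i` depends on `Y i`, and `X̂ i` is the conditional law of `Y i` given the
other spins; hence `E[f i * Φ] = 0` whenever `Φ` does not depend on `Y i`. Taking for `Φ` the value
of `T` with `Y i` reset gives `E[T²] = ∑ i, E[f i * (T - T⁽ⁱ⁾)]`.

With `g i = ∑ r, |γ i r|` (`gamNorm`) we have `|f i| ≤ g i`; resetting `Y i` moves `f i` by at
most `g i` and, the softmax being Lipschitz, moves `f j` by `O(|A i j| (1 + g j))`. Hence
`E[T²] ≤ ∑ i, g i² + O(max |A i j|) (∑ i, g i) (n + ∑ i, g i)`. By Cauchy–Schwarz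
`∑ i, g i² = O(n tr A²)`, and the mean-field bound gives `∑ i, g i = O(n)`, so
`E[T²] / n² = O(tr A² / n + max |A i j|) → 0`.
-/

open Function

theorem sum_sum_update {ι α M : Type*} [Fintype ι] [DecidableEq ι] [Fintype α]
    [AddCommMonoid M] (i : ι) (F : (ι → α) → M) :
    ∑ y, ∑ t, F (update y i t) = Fintype.card α • ∑ y, F y := by
  have hswap : Involutive fun p : α × (ι → α) => (p.2 i, update p.2 i p.1) := fun p => by simp
  rw [sum_comm, ← Fintype.sum_prod_type',
    Fintype.sum_bijective _ hswap.bijective _ (fun p => F p.2) fun _ => rfl,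
    Fintype.sum_prod_type]
  simp

theorem sum_sum_eq_row_add_col {ι G : Type*} [Fintype ι] [DecidableEq ι] [AddCommGroup G]
    (F : ι → ι → G) (i : ι) (hF : ∀ a b, a ≠ i → b ≠ i → F a b = 0) :
    ∑ a, ∑ b, F a b = ∑ b, F i b + ∑ a, F a i - F i i := by
  have hrow : ∀ a ∈ ({i}ᶜ : Finset ι), ∑ b, F a b = F a i := fun a ha =>
    sum_eq_single i (fun b _ hb => hF a b (by simpa using ha) hb) (by simp)
  rw [Fintype.sum_eq_add_sum_compl i, sum_congr rfl hrow,
    Fintype.sum_eq_add_sum_compl i (fun a => F a i)]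
  abel

theorem abs_apply_le_sum_sum_abs {ι κ : Type*} [Fintype ι] [Fintype κ] (F : ι → κ → ℝ)
    (i : ι) (j : κ) : |F i j| ≤ ∑ i, ∑ j, |F i j| :=
  (single_le_sum (fun j _ => abs_nonneg (F i j)) (mem_univ j)).trans
    (single_le_sum (f := fun i => ∑ j, |F i j|) (fun _ _ => sum_nonneg fun _ _ => abs_nonneg _)
      (mem_univ i))

theorem abs_le_iSup_iSup_abs {ι κ : Type*} [Finite ι] [Finite κ] (F : ι → κ → ℝ) (i : ι)
    (j : κ) : |F i j| ≤ ⨆ i, ⨆ j, |F i j| :=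
  (le_ciSup (Set.finite_range _).bddAbove j).trans
    (le_ciSup (f := fun i => ⨆ j, |F i j|) (Set.finite_range _).bddAbove i)

theorem exp_div_sum_exp_le_exp_mul {ι : Type*} [Fintype ι] {a b : ι → ℝ} {δ : ℝ}
    (hab : ∀ s, |a s - b s| ≤ δ) (r : ι) :
    exp (a r) / ∑ s, exp (a s) ≤ exp (2 * δ) * (exp (b r) / ∑ s, exp (b s)) := by
  have hpos : 0 < ∑ s, exp (b s) := sum_pos (fun s _ => exp_pos _) ⟨r, mem_univ r⟩
  have hnum : exp (a r) ≤ exp δ * exp (b r) := by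
    rw [← exp_add, exp_le_exp]; linarith [(abs_le.mp (hab r)).2]
  have hden : exp (-δ) * ∑ s, exp (b s) ≤ ∑ s, exp (a s) := by
    rw [mul_sum]
    refine sum_le_sum fun s _ => ?_
    rw [← exp_add, exp_le_exp]; linarith [(abs_le.mp (hab s)).1]
  calc exp (a r) / ∑ s, exp (a s)
      ≤ exp δ * exp (b r) / (exp (-δ) * ∑ s, exp (b s)) :=
        div_le_div₀ (by positivity) hnum (by positivity) hden
    _ = exp (2 * δ) * (exp (b r) / ∑ s, exp (b s)) := by
        rw [two_mul, exp_add, exp_neg]; field_simp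

theorem exp_div_sum_exp_le_one {ι : Type*} [Fintype ι] (a : ι → ℝ) (r : ι) :
    exp (a r) / ∑ s, exp (a s) ≤ 1 :=
  div_le_one_of_le₀ (single_le_sum (fun s _ => (exp_pos (a s)).le) (mem_univ r))
    (sum_nonneg fun s _ => (exp_pos (a s)).le)

theorem abs_exp_div_sum_exp_sub_le {ι : Type*} [Fintype ι] {a b : ι → ℝ} {δ : ℝ}
    (hab : ∀ s, |a s - b s| ≤ δ) (hδ : 2 * δ ≤ 1) (r : ι) :
    |exp (a r) / ∑ s, exp (a s) - exp (b r) / ∑ s, exp (b s)| ≤ 4 * δ := by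
  have hδ0 : 0 ≤ δ := (abs_nonneg _).trans (hab r)
  have hexp : exp (2 * δ) - 1 ≤ 4 * δ := by
    have h2δ : |2 * δ| = 2 * δ := abs_of_nonneg (by linarith)
    have := (le_abs_self _).trans (abs_exp_sub_one_le (h2δ ▸ hδ))
    linarith
  have hab' : ∀ s, |b s - a s| ≤ δ := fun s => abs_sub_comm (a s) (b s) ▸ hab s
  have hle₁ := exp_div_sum_exp_le_exp_mul hab r
  have hle₂ := exp_div_sum_exp_le_exp_mul hab' r
  have h₁ := exp_div_sum_exp_le_one a r
  have h₂ := exp_div_sum_exp_le_one b r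
  have hpos₁ : 0 ≤ exp (a r) / ∑ s, exp (a s) := by positivity
  have hpos₂ : 0 ≤ exp (b r) / ∑ s, exp (b s) := by positivity
  have hone : 1 ≤ exp (2 * δ) := one_le_exp (by positivity)
  -- `σ a ≤ e^{2δ} σ b` with `σ b ≤ 1` gives `σ a - σ b ≤ e^{2δ} - 1`; symmetrically for `σ b - σ a`.
  rw [abs_le]
  constructor <;> nlinarith

theorem Matrix.IsSymm.trace_mul_self {m R : Type*} [Fintype m] [CommSemiring R]
    {A : Matrix m m R} (hA : A.IsSymm) : (A * A).trace = ∑ i, ∑ j, A i j ^ 2 := by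
  simp only [Matrix.trace, Matrix.diag, Matrix.mul_apply, sq]
  exact sum_congr rfl fun i _ => sum_congr rfl fun j _ => by rw [hA.apply]

section Potts

variable {n q : ℕ} {A : Matrix (Fin n) (Fin n) ℝ} {J : Matrix (Fin q) (Fin q) ℝ} {h : Fin q → ℝ}

theorem gam_xVec (y : Fin n → Fin q) (i : Fin n) (r : Fin q) :
    gam A J (xVec y) i r = ∑ j, A i j * J r (y j) := by
  simp only [gam, xVec, mul_ite, mul_one, mul_zero, mul_sum]
  rw [sum_comm]
  simp [mul_comm]

theorem gam_xVec_update (y : Fin n → Fin q) (i j : Fin n) (t r : Fin q) :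
    gam A J (xVec (update y i t)) j r = gam A J (xVec y) j r + A j i * (J r t - J r (y i)) := by
  simp only [gam_xVec]
  rw [← sub_eq_iff_eq_add', ← sum_sub_distrib, sum_eq_single i]
  · simp only [update_self]; ring
  · intro k _ hk; simp [update_of_ne hk]
  · simp

theorem gam_xVec_update_self {i : Fin n} (hd : A i i = 0) (y : Fin n → Fin q) (t r : Fin q) :
    gam A J (xVec (update y i t)) i r = gam A J (xVec y) i r := by
  simp [gam_xVec_update, hd]

theorem xHat_update_self {i : Fin n} (hd : A i i = 0) (y : Fin n → Fin q) (t r : Fin q) :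
    xHat A J h (update y i t) i r = xHat A J h y i r := by
  simp only [xHat, gam_xVec_update_self hd]

theorem pottsH_update (hA : A.IsSymm) (hJ : J.IsSymm) {i : Fin n} (hd : A i i = 0)
    (y : Fin n → Fin q) (t : Fin q) :
    pottsH A J h (update y i t) =
      pottsH A J h y + (gam A J (xVec y) i t + h t) - (gam A J (xVec y) i (y i) + h (y i)) := by
  set z := update y i t
  have hz : ∀ b, b ≠ i → z b = y b := fun b hb => update_of_ne hb t y
  have hrow : ∀ b, A i b * J (z i) (z b) = A i b * J (z i) (y b) := fun b => by
    rcases eq_or_ne b i with rfl | hb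
    · simp [hd]
    · rw [hz b hb]
  have hcol : ∀ (w : Fin n → Fin q) a, A a i * J (w a) (w i) = A i a * J (w i) (w a) := by
    intro w a; rw [hA.apply, hJ.apply]
  have hquad := sum_sum_eq_row_add_col
    (fun a b => A a b * J (z a) (z b) - A a b * J (y a) (y b)) i
    (fun a b ha hb => by simp [hz a ha, hz b hb])
  have hfield : ∑ a, h (z a) - ∑ a, h (y a) = h t - h (y i) := by
    rw [← sum_sub_distrib, sum_eq_single i (fun b _ hb => by simp [hz b hb]) (by simp)]
    simp [z]
  simp only [sum_sub_distrib, hcol z, hcol y, hrow, hd, zero_mul, sub_self] at hquad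
  simp only [z, update_self] at hquad
  simp only [pottsH, gam_xVec]
  linarith

/-- `xHat A J h y i` is the conditional law of `y i` given the other coordinates. -/
theorem xHat_mul_sum_exp_pottsH_update (hA : A.IsSymm) (hJ : J.IsSymm) {i : Fin n}
    (hd : A i i = 0) (y : Fin n → Fin q) (r : Fin q) :
    xHat A J h y i r * ∑ t, exp (pottsH A J h (update y i t)) =
      exp (pottsH A J h (update y i r)) := by
  have hfactor : ∀ t, exp (pottsH A J h (update y i t)) =
      exp (pottsH A J h y - (gam A J (xVec y) i (y i) + h (y i))) *
        exp (gam A J (xVec y) i t + h t) := fun t => by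
    rw [pottsH_update hA hJ hd, ← exp_add]; ring_nf
  have hpos : 0 < ∑ s, exp (gam A J (xVec y) i s + h s) :=
    sum_pos (fun s _ => exp_pos _) ⟨r, mem_univ r⟩
  simp only [hfactor, ← mul_sum, xHat]
  field_simp

theorem sum_pottsWeight_mul_sub_xHat_mul_eq_zero [NeZero q] (hA : A.IsSymm) (hJ : J.IsSymm)
    {i : Fin n} (hd : A i i = 0) (r : Fin q) (Ψ : (Fin n → Fin q) → ℝ)
    (hΨ : ∀ y t, Ψ (update y i t) = Ψ y) :
    ∑ y, pottsWeight A J h y * ((xVec y i r - xHat A J h y i r) * Ψ y) = 0 := by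
  have hresample : ∀ y : Fin n → Fin q, ∑ t, exp (pottsH A J h (update y i t)) *
      ((xVec (update y i t) i r - xHat A J h (update y i t) i r) * Ψ (update y i t)) = 0 := by
    intro y
    simp only [xVec, update_self, xHat_update_self hd, hΨ, mul_sub, sub_mul, mul_ite,
      mul_zero, ite_mul, zero_mul, sum_sub_distrib, sum_ite_eq', mem_univ, if_true]
    rw [← xHat_mul_sum_exp_pottsH_update hA hJ hd y r, ← sum_mul]
    ring
  have hsum := sum_sum_update i fun y =>
    exp (pottsH A J h y) * ((xVec y i r - xHat A J h y i r) * Ψ y)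
  simp only [hresample, sum_const_zero, Fintype.card_fin] at hsum
  simp only [pottsWeight, div_mul_eq_mul_div, ← sum_div]
  rw [(smul_eq_zero.mp hsum.symm).resolve_left (NeZero.ne q), zero_div]

noncomputable def pottsResidual (A : Matrix (Fin n) (Fin n) ℝ) (J : Matrix (Fin q) (Fin q) ℝ)
    (h : Fin q → ℝ) (y : Fin n → Fin q) (i : Fin n) : ℝ :=
  ∑ r, (xVec y i r - xHat A J h y i r) * gam A J (xVec y) i r

noncomputable def pottsResidualSum (A : Matrix (Fin n) (Fin n) ℝ)
    (J : Matrix (Fin q) (Fin q) ℝ) (h : Fin q → ℝ) (y : Fin n → Fin q) : ℝ :=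
  ∑ i, pottsResidual A J h y i

theorem sum_pottsWeight_mul_pottsResidual_mul_eq_zero [NeZero q] (hA : A.IsSymm) (hJ : J.IsSymm)
    {i : Fin n} (hd : A i i = 0) (Φ : (Fin n → Fin q) → ℝ)
    (hΦ : ∀ y t, Φ (update y i t) = Φ y) :
    ∑ y, pottsWeight A J h y * (pottsResidual A J h y i * Φ y) = 0 := by
  simp only [pottsResidual, sum_mul, mul_sum]
  rw [sum_comm]
  refine sum_eq_zero fun r _ => ?_
  simpa only [mul_assoc] using sum_pottsWeight_mul_sub_xHat_mul_eq_zero hA hJ hd r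
    (fun y => gam A J (xVec y) i r * Φ y) fun y t => by rw [gam_xVec_update_self hd, hΦ]

theorem sum_pottsWeight_mul_pottsResidualSum_sq [NeZero q] (hA : A.IsSymm) (hJ : J.IsSymm)
    (hd : ∀ i, A i i = 0) :
    ∑ y, pottsWeight A J h y * pottsResidualSum A J h y ^ 2 =
      ∑ i : Fin n, ∑ y : Fin n → Fin q, pottsWeight A J h y * (pottsResidual A J h y i *
        (pottsResidualSum A J h y - pottsResidualSum A J h (update y i 0))) := by
  have horth : ∀ i : Fin n, ∑ y : Fin n → Fin q, pottsWeight A J h y *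
      (pottsResidual A J h y i * pottsResidualSum A J h (update y i 0)) = 0 := fun i =>
    sum_pottsWeight_mul_pottsResidual_mul_eq_zero hA hJ (hd i) _ fun y t => by rw [update_idem]
  simp only [mul_sub, sum_sub_distrib, horth, sub_zero]
  rw [sum_comm]
  refine sum_congr rfl fun y _ => ?_
  rw [← mul_sum, ← sum_mul, sq, pottsResidualSum]

noncomputable def gamNorm (A : Matrix (Fin n) (Fin n) ℝ) (J : Matrix (Fin q) (Fin q) ℝ)
    (y : Fin n → Fin q) (i : Fin n) : ℝ :=
  ∑ r, |gam A J (xVec y) i r|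

theorem gamNorm_nonneg (y : Fin n → Fin q) (i : Fin n) : 0 ≤ gamNorm A J y i :=
  sum_nonneg fun _ _ => abs_nonneg _

theorem abs_xVec_sub_xVec_le_one (y z : Fin n → Fin q) (i j : Fin n) (r : Fin q) :
    |xVec y i r - xVec z j r| ≤ 1 := by
  unfold xVec; split_ifs <;> norm_num

theorem abs_xVec_sub_xHat_le_one [NeZero q] (y : Fin n → Fin q) (i : Fin n) (r : Fin q) :
    |xVec y i r - xHat A J h y i r| ≤ 1 := by
  have h₀ : 0 ≤ xHat A J h y i r := by unfold xHat; positivity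
  have h₁ : xHat A J h y i r ≤ 1 := exp_div_sum_exp_le_one (fun s => gam A J (xVec y) i s + h s) r
  rw [abs_le]; unfold xVec; split_ifs <;> constructor <;> linarith

theorem abs_pottsResidual_le_gamNorm [NeZero q] (y : Fin n → Fin q) (i : Fin n) :
    |pottsResidual A J h y i| ≤ gamNorm A J y i :=
  (abs_sum_le_sum_abs _ _).trans <| sum_le_sum fun r _ => by
    rw [abs_mul]; exact mul_le_of_le_one_left (abs_nonneg _) (abs_xVec_sub_xHat_le_one y i r)

theorem abs_pottsResidual_sub_update_self_le {i : Fin n} (hd : A i i = 0) (y : Fin n → Fin q)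
    (t : Fin q) :
    |pottsResidual A J h y i - pottsResidual A J h (update y i t) i| ≤ gamNorm A J y i := by
  simp only [pottsResidual, gam_xVec_update_self hd, xHat_update_self hd, ← sum_sub_distrib,
    ← sub_mul, sub_sub_sub_cancel_right]
  refine (abs_sum_le_sum_abs _ _).trans <| sum_le_sum fun r _ => ?_
  rw [abs_mul]
  exact mul_le_of_le_one_left (abs_nonneg _) (abs_xVec_sub_xVec_le_one _ _ _ _ r)

theorem abs_pottsResidual_sub_update_of_ne_le [NeZero q] (hA : A.IsSymm) {M : ℝ}
    (hM : ∀ r s, |J r s| ≤ M) {i j : Fin n} (hji : j ≠ i) (hsmall : 4 * M * |A i j| ≤ 1)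
    (y : Fin n → Fin q) (t : Fin q) :
    |pottsResidual A J h y j - pottsResidual A J h (update y i t) j| ≤
      2 * M * |A i j| * (q + 4 * gamNorm A J y j) := by
  set y' := update y i t
  set δ := 2 * M * |A i j|
  have hgam : ∀ r, |gam A J (xVec y) j r - gam A J (xVec y') j r| ≤ δ := fun r => by
    rw [gam_xVec_update, ← hA.apply, sub_add_cancel_left, abs_neg, abs_mul, mul_comm]
    have := (abs_sub _ _).trans (add_le_add (hM r t) (hM r (y i)))
    exact mul_le_mul_of_nonneg_right (by linarith) (abs_nonneg _)
  have hxHat : ∀ r, |xHat A J h y' j r - xHat A J h y j r| ≤ 4 * δ := fun r =>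
    abs_exp_div_sum_exp_sub_le (a := fun s => gam A J (xVec y') j s + h s)
      (b := fun s => gam A J (xVec y) j s + h s) (δ := δ)
      (fun s => by rw [add_sub_add_right_eq_sub, abs_sub_comm]; exact hgam s) (by linarith) r
  have hxVec : ∀ r, xVec y' j r = xVec y j r := fun r => by simp [xVec, y', update_of_ne hji]
  have hterm : ∀ r, |(xVec y j r - xHat A J h y j r) * gam A J (xVec y) j r -
      (xVec y' j r - xHat A J h y' j r) * gam A J (xVec y') j r| ≤
        δ + 4 * δ * |gam A J (xVec y) j r| := fun r => by
    have hx := abs_xVec_sub_xHat_le_one (A := A) (J := J) (h := h) y' j r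
    rw [hxVec] at hx ⊢
    set x := xVec y j r
    set g := gam A J (xVec y) j r
    set g' := gam A J (xVec y') j r
    set u := xHat A J h y j r
    set u' := xHat A J h y' j r
    rw [show (x - u) * g - (x - u') * g' = (x - u') * (g - g') + (u' - u) * g by ring]
    refine (abs_add_le _ _).trans (add_le_add ?_ ?_) <;> rw [abs_mul]
    · exact (mul_le_of_le_one_left (abs_nonneg _) hx).trans (hgam r)
    · exact mul_le_mul_of_nonneg_right (hxHat r) (abs_nonneg _)
  calc _ ≤ ∑ r, (δ + 4 * δ * |gam A J (xVec y) j r|) := by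
        rw [pottsResidual, pottsResidual, ← sum_sub_distrib]
        exact (abs_sum_le_sum_abs _ _).trans (sum_le_sum fun r _ => hterm r)
    _ = δ * (q + 4 * gamNorm A J y j) := by
        rw [sum_add_distrib, sum_const, card_univ, Fintype.card_fin, nsmul_eq_mul, ← mul_sum,
          gamNorm]
        ring

theorem abs_pottsResidualSum_sub_update_le [NeZero q] (hA : A.IsSymm) {M : ℝ}
    (hM : ∀ r s, |J r s| ≤ M) {i : Fin n} (hd : A i i = 0) (hsmall : ∀ j, 4 * M * |A i j| ≤ 1)
    (y : Fin n → Fin q) (t : Fin q) :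
    |pottsResidualSum A J h y - pottsResidualSum A J h (update y i t)| ≤
      gamNorm A J y i + ∑ j, 2 * M * |A i j| * (q + 4 * gamNorm A J y j) := by
  have hterm : ∀ j, |pottsResidual A J h y j - pottsResidual A J h (update y i t) j| ≤
      (if j = i then gamNorm A J y i else 0) + 2 * M * |A i j| * (q + 4 * gamNorm A J y j) := by
    intro j
    rcases eq_or_ne j i with rfl | hji
    · simpa [hd] using abs_pottsResidual_sub_update_self_le hd y t
    · simpa [hji] using abs_pottsResidual_sub_update_of_ne_le hA hM hji (hsmall j) y t
  rw [pottsResidualSum, pottsResidualSum, ← sum_sub_distrib]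
  refine (abs_sum_le_sum_abs _ _).trans ((sum_le_sum fun j _ => hterm j).trans_eq ?_)
  rw [sum_add_distrib, sum_ite_eq']
  simp

theorem gamNorm_le {M : ℝ} (hM : ∀ r s, |J r s| ≤ M) (y : Fin n → Fin q) (i : Fin n) :
    gamNorm A J y i ≤ q * M * ∑ j, |A i j| := by
  calc gamNorm A J y i ≤ ∑ _r : Fin q, ∑ j, |A i j| * M := by
        refine sum_le_sum fun r _ => ?_
        rw [gam_xVec]
        refine (abs_sum_le_sum_abs _ _).trans (sum_le_sum fun j _ => ?_)
        rw [abs_mul]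
        exact mul_le_mul_of_nonneg_left (hM r (y j)) (abs_nonneg _)
    _ = q * M * ∑ j, |A i j| := by simp [← sum_mul]; ring

theorem sum_gamNorm_le [NeZero q] {M C : ℝ} (hM : ∀ r s, |J r s| ≤ M)
    (hC : ∀ x : Fin n → ℝ, (∀ j, x j ∈ Set.Icc (0 : ℝ) 1) → ∑ i, |∑ j, A i j * x j| ≤ C * n)
    (y : Fin n → Fin q) :
    ∑ i, gamNorm A J y i ≤ q ^ 2 * M * (C * n) := by
  have hM0 : 0 ≤ M := (abs_nonneg _).trans (hM 0 0)
  have hcol : ∀ s, ∑ i, |∑ j, A i j * xVec y j s| ≤ C * n := fun s =>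
    hC _ fun j => by unfold xVec; split_ifs <;> norm_num
  calc ∑ i, gamNorm A J y i ≤ ∑ i, ∑ _r : Fin q, ∑ s, M * |∑ j, A i j * xVec y j s| := by
        refine sum_le_sum fun i _ => sum_le_sum fun r _ => ?_
        refine (abs_sum_le_sum_abs _ _).trans (sum_le_sum fun s _ => ?_)
        rw [abs_mul]
        exact mul_le_mul_of_nonneg_right (hM r s) (abs_nonneg _)
    _ = q * ∑ s, M * ∑ i, |∑ j, A i j * xVec y j s| := by
        simp only [sum_const, card_univ, Fintype.card_fin, nsmul_eq_mul, ← mul_sum]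
        rw [sum_comm]
    _ ≤ q * ∑ _s : Fin q, M * (C * n) := by
        gcongr with s; exact hcol s
    _ = q ^ 2 * M * (C * n) := by simp; ring

theorem sum_sq_gamNorm_le (hA : A.IsSymm) {M : ℝ} (hM : ∀ r s, |J r s| ≤ M)
    (y : Fin n → Fin q) :
    ∑ i, gamNorm A J y i ^ 2 ≤ q ^ 2 * M ^ 2 * n * (A * A).trace := by
  rw [hA.trace_mul_self, mul_sum]
  refine sum_le_sum fun i _ => ?_
  calc gamNorm A J y i ^ 2 ≤ (q * M * ∑ j, |A i j|) ^ 2 :=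
        pow_le_pow_left₀ (gamNorm_nonneg y i) (gamNorm_le hM y i) 2
    _ = q ^ 2 * M ^ 2 * (∑ j, |A i j|) ^ 2 := by ring
    _ ≤ q ^ 2 * M ^ 2 * (n * ∑ j, A i j ^ 2) := by
        gcongr
        simpa using sq_sum_le_card_mul_sum_sq (s := univ) (f := fun j => |A i j|)
    _ = _ := by ring

theorem sum_gamNorm_mul_sum_le [NeZero q] {M C ε : ℝ} (hM : ∀ r s, |J r s| ≤ M)
    (hC : ∀ x : Fin n → ℝ, (∀ j, x j ∈ Set.Icc (0 : ℝ) 1) → ∑ i, |∑ j, A i j * x j| ≤ C * n)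
    (hε0 : 0 ≤ ε) (hε : ∀ i j, |A i j| ≤ ε) (y : Fin n → Fin q) :
    ∑ i, gamNorm A J y i * ∑ j, 2 * M * |A i j| * (q + 4 * gamNorm A J y j) ≤
      2 * M * ε * (q ^ 2 * M * (C * n) * (q * n + 4 * (q ^ 2 * M * (C * n)))) := by
  have hM0 : 0 ≤ M := (abs_nonneg _).trans (hM 0 0)
  have hS := sum_gamNorm_le hM hC y
  have hS0 : 0 ≤ ∑ i, gamNorm A J y i := sum_nonneg fun i _ => gamNorm_nonneg y i
  calc _ ≤ ∑ i, gamNorm A J y i * ∑ j, 2 * M * ε * (q + 4 * gamNorm A J y j) := by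
        gcongr with i _ j
        · exact gamNorm_nonneg y i
        · have := gamNorm_nonneg (A := A) (J := J) y j; positivity
        · exact hε i j
    _ = 2 * M * ε * ((∑ i, gamNorm A J y i) * (q * n + 4 * ∑ i, gamNorm A J y i)) := by
        simp only [← mul_sum, ← sum_mul, sum_add_distrib, sum_const, card_univ,
          Fintype.card_fin, nsmul_eq_mul]
        ring
    _ ≤ _ := by
        have := hS0.trans hS
        gcongr

theorem pottsWeight_nonneg (y : Fin n → Fin q) : 0 ≤ pottsWeight A J h y := by
  unfold pottsWeight; positivity

theorem sum_pottsWeight_mul_le [NeZero q] {F : (Fin n → Fin q) → ℝ} {c : ℝ} (hF : ∀ y, F y ≤ c) :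
    ∑ y, pottsWeight A J h y * F y ≤ c := by
  have hZ : 0 < ∑ y : Fin n → Fin q, exp (pottsH A J h y) :=
    sum_pos (fun _ _ => exp_pos _) univ_nonempty
  calc ∑ y, pottsWeight A J h y * F y ≤ ∑ y, pottsWeight A J h y * c :=
        sum_le_sum fun y _ => mul_le_mul_of_nonneg_left (hF y) (pottsWeight_nonneg y)
    _ = c := by simp only [← sum_mul, pottsWeight, ← sum_div, div_self hZ.ne', one_mul]

theorem sum_pottsWeight_mul_pottsResidualSum_sq_le [NeZero q] (hA : A.IsSymm) (hJ : J.IsSymm)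
    (hd : ∀ i, A i i = 0) {M C ε : ℝ} (hM : ∀ r s, |J r s| ≤ M)
    (hC : ∀ x : Fin n → ℝ, (∀ j, x j ∈ Set.Icc (0 : ℝ) 1) → ∑ i, |∑ j, A i j * x j| ≤ C * n)
    (hε0 : 0 ≤ ε) (hε : ∀ i j, |A i j| ≤ ε) (hsmall : 4 * M * ε ≤ 1) :
    ∑ y, pottsWeight A J h y * pottsResidualSum A J h y ^ 2 ≤
      q ^ 2 * M ^ 2 * n * (A * A).trace +
        2 * M * ε * (q ^ 2 * M * (C * n) * (q * n + 4 * (q ^ 2 * M * (C * n)))) := by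
  have hM0 : 0 ≤ M := (abs_nonneg _).trans (hM 0 0)
  have hsmall_entry : ∀ i j, 4 * M * |A i j| ≤ 1 := fun i j =>
    (mul_le_mul_of_nonneg_left (hε i j) (by positivity)).trans hsmall
  rw [sum_pottsWeight_mul_pottsResidualSum_sq hA hJ hd, sum_comm]
  simp only [← mul_sum]
  refine sum_pottsWeight_mul_le fun y => ?_
  calc _ ≤ ∑ i, gamNorm A J y i *
        (gamNorm A J y i + ∑ j, 2 * M * |A i j| * (q + 4 * gamNorm A J y j)) := by
        refine sum_le_sum fun i _ => (le_abs_self _).trans ?_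
        rw [abs_mul]
        exact mul_le_mul (abs_pottsResidual_le_gamNorm y i)
          (abs_pottsResidualSum_sub_update_le hA hM (hd i) (hsmall_entry i) y 0) (abs_nonneg _)
          (gamNorm_nonneg y i)
    _ = ∑ i, gamNorm A J y i ^ 2 +
          ∑ i, gamNorm A J y i * ∑ j, 2 * M * |A i j| * (q + 4 * gamNorm A J y j) := by
        simp only [mul_add, sq, sum_add_distrib]
    _ ≤ _ := add_le_add (sum_sq_gamNorm_le hA hM y) (sum_gamNorm_mul_sum_le hM hC hε0 hε y)

end Potts

theorem lemma_gamma_close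
    (q : ℕ) (hq : 2 ≤ q) (J : Matrix (Fin q) (Fin q) ℝ) (hJ : J.IsSymm) (h : Fin q → ℝ)
    (A : (n : ℕ) → Matrix (Fin n) (Fin n) ℝ) (hsymm : ∀ n, (A n).IsSymm)
    (hMF : meanFieldAssumption A)
    (hdiag : ∀ n : ℕ, ∀ i : Fin n, A n i i = 0)
    (hmax : Tendsto (fun n : ℕ => ⨆ i : Fin n, ⨆ j : Fin n, |A n i j|) atTop (nhds 0)) :
    Tendsto
      (fun n : ℕ =>
        (∑ y : Fin n → Fin q, pottsWeight (A n) J h y *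
          (∑ i, ∑ r, (xVec y i r - xHat (A n) J h y i r) * gam (A n) J (xVec y) i r) ^ 2)
          / (n : ℝ) ^ 2)
      atTop (nhds 0) := by
  have : NeZero q := ⟨by omega⟩
  obtain ⟨⟨C, hC⟩, htrace⟩ := hMF
  have hM := abs_apply_le_sum_sum_abs J
  set M := ∑ r, ∑ s, |J r s|
  set ε := fun n : ℕ => ⨆ i : Fin n, ⨆ j : Fin n, |A n i j|
  have hε0 : ∀ n, 0 ≤ ε n := fun n =>
    Real.iSup_nonneg fun _ => Real.iSup_nonneg fun _ => abs_nonneg _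
  have hsmall : ∀ᶠ n in atTop, 4 * M * ε n ≤ 1 := by
    simpa using (hmax.const_mul (4 * M)).eventually (ge_mem_nhds (by norm_num : 4 * M * 0 < 1))
  have hbound : Tendsto (fun n : ℕ => q ^ 2 * M ^ 2 * ((A n * A n).trace / n) +
      ε n * (2 * M * (q ^ 2 * M * C * (q + 4 * (q ^ 2 * M * C))))) atTop (nhds 0) := by
    simpa using (htrace.const_mul _).add (hmax.mul_const _)
  refine squeeze_zero' (Eventually.of_forall fun n => div_nonneg
    (sum_nonneg fun y _ => mul_nonneg (pottsWeight_nonneg y) (sq_nonneg _)) (sq_nonneg _)) ?_ hbound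
  filter_upwards [hsmall, eventually_gt_atTop 0] with n hsmall_n hn
  rw [div_le_iff₀ (by positivity)]
  refine (sum_pottsWeight_mul_pottsResidualSum_sq_le (hsymm n) hJ (hdiag n) hM (hC n) (hε0 n)
    (abs_le_iSup_iSup_abs (A n)) hsmall_n).trans_eq ?_
  field_simp
end

section
/- Let p ∈ (0,1) and β ∈ ℝ with β²·p·(1−p) > 1. Then the equation σ = tanh(β·(1−p)·tanh(β·p·σ)) has a unique positive real solution σ*, and its set of real solutions is exactly {−σ*, 0, σ*}. -/
/-!
Since `η_{β,p}` is even in `β`, write it as `f σ = tanh (a * tanh (b * σ))` with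
`a = |β| (1 - p)`, `b = |β| p > 0`; `f` is odd. Strict concavity of `tanh` on `[0, ∞)`
makes `tanh x / x` strictly decreasing there, and `f σ / σ` factors as `a b` times two such
quotients evaluated at increasing arguments, so it is strictly decreasing on `(0, ∞)`. It tends
to `f' 0 = a b = β² p (1 - p) > 1` at `0⁺` and is `< 1` at `σ = 1` because `tanh < 1`, so it
crosses the value `1` exactly once: this is the unique positive fixed point, and oddness gives
the rest.
-/

open Real Set Filter Topology

namespace Real

theorem hasDerivAt_tanh (x : ℝ) : HasDerivAt tanh (cosh x ^ 2)⁻¹ x := by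
  have h := (hasDerivAt_sinh x).div (hasDerivAt_cosh x) (cosh_pos x).ne'
  rw [show tanh = fun y => sinh y / cosh y from funext tanh_eq_sinh_div_cosh]
  refine h.congr_deriv ?_
  rw [← sq, ← sq, cosh_sq_sub_sinh_sq, one_div]

theorem deriv_tanh : deriv tanh = fun x => (cosh x ^ 2)⁻¹ :=
  funext fun x => (hasDerivAt_tanh x).deriv

@[fun_prop]
theorem continuous_tanh : Continuous tanh :=
  continuous_iff_continuousAt.2 fun x => (hasDerivAt_tanh x).continuousAt

theorem tanh_strictMono : StrictMono tanh :=
  strictMono_of_deriv_pos fun x => by rw [deriv_tanh]; positivity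

theorem tanh_pos {x : ℝ} (hx : 0 < x) : 0 < tanh x := by
  simpa only [tanh_zero] using tanh_strictMono hx

theorem strictConcaveOn_tanh_Ici : StrictConcaveOn ℝ (Ici 0) tanh := by
  refine StrictAntiOn.strictConcaveOn_of_deriv (convex_Ici 0) continuous_tanh.continuousOn ?_
  rw [deriv_tanh, interior_Ici]
  intro x hx y hy hxy
  have hcosh := cosh_strictMonoOn (mem_Ici.2 (le_of_lt hx)) (mem_Ici.2 (le_of_lt hy)) hxy
  have := cosh_pos x
  dsimp only
  gcongr

theorem strictAntiOn_tanh_div_self : StrictAntiOn (fun x => tanh x / x) (Ioi 0) := by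
  intro x hx y hy hxy
  simpa only [tanh_zero, sub_zero] using
    strictConcaveOn_tanh_Ici.secant_strict_mono self_mem_Ici (mem_Ici.2 (le_of_lt hx))
      (mem_Ici.2 (le_of_lt hy)) (ne_of_gt hx) (ne_of_gt hy) hxy

end Real

theorem HasDerivAt.tanh {f : ℝ → ℝ} {f' x : ℝ} (hf : HasDerivAt f f' x) :
    HasDerivAt (fun y => Real.tanh (f y)) ((Real.cosh (f x) ^ 2)⁻¹ * f') x :=
  (hasDerivAt_tanh (f x)).comp x hf

theorem exists_pos_lt_apply_of_hasDerivAt_zero {f : ℝ → ℝ} {c : ℝ} (hf : HasDerivAt f c 0)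
    (h0 : f 0 = 0) (hc : 1 < c) : ∃ x, 0 < x ∧ x < f x := by
  have hslope : Tendsto (fun x => f x / x) (𝓝[>] 0) (𝓝 c) := by
    refine ((hasDerivAt_iff_tendsto_slope.1 hf).mono_left
      (nhdsWithin_mono 0 fun x hx => ne_of_gt hx)).congr fun x => ?_
    rw [slope_def_field, h0, sub_zero, sub_zero]
  obtain ⟨x, hx1, hx0⟩ :=
    ((hslope.eventually (Ioi_mem_nhds hc)).and self_mem_nhdsWithin).exists
  exact ⟨x, hx0, by rwa [one_lt_div hx0] at hx1⟩

theorem existsUnique_pos_fixedPoint_of_strictAntiOn_div {f : ℝ → ℝ}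
    (hf : ContinuousOn f (Ioi 0)) (hanti : StrictAntiOn (fun x => f x / x) (Ioi 0)) {x y : ℝ}
    (hx : 0 < x) (hfx : x < f x) (hy : 0 < y) (hfy : f y < y) : ∃! s, 0 < s ∧ s = f s := by
  have hratio : ∀ t, 0 < t → (t = f t ↔ f t / t = 1) := fun t ht => by
    rw [div_eq_one_iff_eq ht.ne', eq_comm]
  have hxy : x < y := (hanti.lt_iff_gt hy hx).1 <| by
    rw [← one_lt_div hx] at hfx; rw [← div_lt_one hy] at hfy; exact hfy.trans hfx
  have hcont : ContinuousOn (fun t => f t - t) (Icc x y) :=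
    (hf.mono fun t ht => hx.trans_le ht.1).sub continuousOn_id
  obtain ⟨s, ⟨hxs, -⟩, hs⟩ : ∃ s ∈ Icc x y, f s - s = 0 :=
    intermediate_value_Icc' hxy.le hcont ⟨by linarith, by linarith⟩
  have hs0 : 0 < s := hx.trans_le hxs
  refine ⟨s, ⟨hs0, by linarith⟩, fun t ⟨ht0, hft⟩ => hanti.injOn ht0 hs0 ?_⟩
  rw [(hratio t ht0).1 hft, (hratio s hs0).1 (by linarith)]

theorem setOf_fixedPoint_eq_of_odd {f : ℝ → ℝ} (hodd : Function.Odd f) {s : ℝ}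
    (hfs : s = f s) (huniq : ∀ x, 0 < x ∧ x = f x → x = s) : {x | x = f x} = {-s, 0, s} := by
  ext x
  simp only [mem_ofPred_eq, mem_insert_iff, mem_singleton_iff]
  constructor
  · intro hx
    rcases lt_trichotomy x 0 with hneg | rfl | hpos
    · left
      linarith [huniq (-x) ⟨by linarith, by rw [hodd x]; linarith⟩]
    · exact Or.inr (Or.inl rfl)
    · exact Or.inr (Or.inr (huniq x ⟨hpos, hx⟩))
  · rintro (rfl | rfl | rfl)
    · rw [hodd s]; linarith
    · exact hodd.map_zero.symm
    · exact hfs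

section TanhTanh

variable {a b : ℝ}

theorem odd_tanh_mul_tanh_mul (a b : ℝ) : Function.Odd fun σ => tanh (a * tanh (b * σ)) :=
  fun σ => by simp only [mul_neg, tanh_neg]

theorem hasDerivAt_tanh_mul_tanh_mul_zero (a b : ℝ) :
    HasDerivAt (fun σ => tanh (a * tanh (b * σ))) (a * b) 0 := by
  simpa using (((hasDerivAt_id (0 : ℝ)).const_mul b).tanh.const_mul a).tanh

theorem strictAntiOn_tanh_mul_tanh_mul_div (ha : 0 < a) (hb : 0 < b) :
    StrictAntiOn (fun σ => tanh (a * tanh (b * σ)) / σ) (Ioi 0) := by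
  have hscale : StrictMono fun σ => b * σ := strictMono_mul_left_of_pos hb
  have hinner : StrictMono fun σ => a * tanh (b * σ) :=
    (strictMono_mul_left_of_pos ha).comp (tanh_strictMono.comp hscale)
  have hscale_pos : MapsTo (fun σ => b * σ) (Ioi 0) (Ioi 0) := fun σ hσ => mul_pos hb hσ
  have hinner_pos : MapsTo (fun σ => a * tanh (b * σ)) (Ioi 0) (Ioi 0) :=
    fun σ hσ => mul_pos ha (tanh_pos (mul_pos hb hσ))
  have houter_anti :=
    strictAntiOn_tanh_div_self.comp_strictMonoOn (hinner.strictMonoOn _) hinner_pos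
  have hinner_anti :=
    strictAntiOn_tanh_div_self.comp_strictMonoOn (hscale.strictMonoOn _) hscale_pos
  have hfactor : ∀ σ ∈ Ioi (0 : ℝ), tanh (a * tanh (b * σ)) / σ = a * b *
      (tanh (a * tanh (b * σ)) / (a * tanh (b * σ)) * (tanh (b * σ) / (b * σ))) := by
    intro σ hσ
    have := (tanh_pos (mul_pos hb hσ)).ne'
    field_simp [ha.ne', hb.ne', (mem_Ioi.1 hσ).ne']
  intro s hs t ht hst
  dsimp only
  rw [hfactor t ht, hfactor s hs]
  refine mul_lt_mul_of_pos_left (mul_lt_mul'' (houter_anti hs ht hst) (hinner_anti hs ht hst)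
    (div_pos (tanh_pos (hinner_pos ht)) (hinner_pos ht)).le
    (div_pos (tanh_pos (hscale_pos ht)) (hscale_pos ht)).le) (mul_pos ha hb)

theorem existsUnique_pos_fixedPoint_tanh_mul_tanh_mul (ha : 0 < a) (hb : 0 < b) (hab : 1 < a * b) :
    ∃! s, 0 < s ∧ s = tanh (a * tanh (b * s)) := by
  obtain ⟨x, hx, hfx⟩ :=
    exists_pos_lt_apply_of_hasDerivAt_zero (hasDerivAt_tanh_mul_tanh_mul_zero a b)
      (odd_tanh_mul_tanh_mul a b).map_zero hab
  exact existsUnique_pos_fixedPoint_of_strictAntiOn_div (by fun_prop)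
    (strictAntiOn_tanh_mul_tanh_mul_div ha hb) hx hfx one_pos (tanh_lt_one _)

end TanhTanh

theorem fixed_point_supercritical (p β : ℝ) (hp : p ∈ Set.Ioo (0 : ℝ) 1)
    (hβ : 1 < β ^ 2 * p * (1 - p)) :
    ∃ s : ℝ, 0 < s ∧ s = Real.tanh (β * (1 - p) * Real.tanh (β * p * s)) ∧
      {σ : ℝ | σ = Real.tanh (β * (1 - p) * Real.tanh (β * p * σ))} = {-s, 0, s} := by
  obtain ⟨hp0, hp1⟩ := hp
  have hβ0 : 0 < |β| := abs_pos.2 (by rintro rfl; norm_num at hβ)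
  have hsign : ∀ σ, tanh (β * (1 - p) * tanh (β * p * σ)) =
      tanh (|β| * (1 - p) * tanh (|β| * p * σ)) := by
    intro σ
    rcases abs_choice β with h | h <;> simp only [h, neg_mul, mul_neg, tanh_neg, neg_neg]
  have hab : 1 < |β| * (1 - p) * (|β| * p) := by
    calc 1 < β ^ 2 * p * (1 - p) := hβ
      _ = |β| * (1 - p) * (|β| * p) := by rw [← sq_abs]; ring
  obtain ⟨s, ⟨hs, hfs⟩, huniq⟩ := existsUnique_pos_fixedPoint_tanh_mul_tanh_mul
    (mul_pos hβ0 (sub_pos.2 hp1)) (mul_pos hβ0 hp0) hab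
  simp only [hsign]
  exact ⟨s, hs, hfs, setOf_fixedPoint_eq_of_odd (odd_tanh_mul_tanh_mul _ _) hfs huniq⟩
end
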